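/- arXiv:2406.13063 — 9 statements merged into one kernel-verified Lean document; each statement's English description precedes it below -/
import Mathlib

section
/- Let R be a commutative ring with a translation-invariant partial order on its additive group such that squares are positive (r² ≥ 0 for all r ∈ R) and such that every element s ∈ 1 + R⁺ is localizable (i.e., whenever r·s ≥ 0 for some r ∈ R, then r ≥ 0). Then R is localizable: for every r ∈ R there exists a localizable element s ∈ 1 + R⁺ with −s ≤ r ≤ s. (Indeed, s = 1 + 1 + 2r² works, using r ≤ (1+r)² and −r ≤ (1−r)².) -/
/-! Take `s = 1 + r²`. Twice `s ± r` is `(r ± 1)² + (1 + r²) ≥ 0`, and `2 = 1 + 1` lies in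
`1 + R⁺`, so it is localizable and may be cancelled: `s ± r ≥ 0`. -/

section

variable {R : Type*} [CommRing R] [PartialOrder R] [AddLeftMono R]

theorem neg_one_add_sq_le_and_le_one_add_sq (hsq : ∀ r : R, 0 ≤ r ^ 2)
    (h2 : ∀ r : R, 0 ≤ r * 2 → 0 ≤ r) (r : R) : -(1 + r ^ 2) ≤ r ∧ r ≤ 1 + r ^ 2 := by
  have hpos : (0 : R) ≤ 1 + r ^ 2 := add_nonneg (by simpa using hsq 1) (hsq r)
  constructor
  · rw [neg_le_iff_add_nonneg']
    refine h2 _ ?_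
    calc (0 : R) ≤ (r + 1) ^ 2 + (1 + r ^ 2) := add_nonneg (hsq _) hpos
      _ = (1 + r ^ 2 + r) * 2 := by ring
  · rw [← sub_nonneg]
    refine h2 _ ?_
    calc (0 : R) ≤ (r - 1) ^ 2 + (1 + r ^ 2) := add_nonneg (hsq _) hpos
      _ = (1 + r ^ 2 - r) * 2 := by ring

end

/-- A commutative ring with translation-invariant partial order, squares positive,
and every element of `1 + R⁺` localizable, is localizable. -/
theorem stmt_0 (R : Type*) [CommRing R] [PartialOrder R]
    [CovariantClass R R (· + ·) (· ≤ ·)]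
    (hsq : ∀ r : R, 0 ≤ r ^ 2)
    (hloc : ∀ s : R, (∃ t : R, 0 ≤ t ∧ s = 1 + t) → ∀ r : R, 0 ≤ r * s → 0 ≤ r) :
    ∀ r : R, ∃ s : R, (∃ t : R, 0 ≤ t ∧ s = 1 + t) ∧
      (∀ r' : R, 0 ≤ r' * s → 0 ≤ r') ∧ -s ≤ r ∧ r ≤ s := by
  intro r
  have hone : (0 : R) ≤ 1 := by simpa using hsq 1
  have hs : ∃ t : R, 0 ≤ t ∧ 1 + r ^ 2 = 1 + t := ⟨r ^ 2, hsq r, rfl⟩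
  obtain ⟨hlo, hhi⟩ :=
    neg_one_add_sq_le_and_le_one_add_sq hsq (hloc 2 ⟨1, hone, one_add_one_eq_two.symm⟩) r
  exact ⟨1 + r ^ 2, hs, hloc _ hs, hlo, hhi⟩
end

section
/- Let R be a commutative ring with a translation-invariant partial order on its additive group. Assume R is archimedean (if kg + h ∈ R⁺ for all k ∈ ℕ then g ∈ R⁺) and localizable. Then every positive natural number n (viewed as n·1 ∈ R) is a localizable element of R: if nr ∈ R⁺ for some r ∈ R, then r ∈ R⁺. -/
/-!
A localizable bound `s₀ ≥ 0` of `0` satisfies `0 ≤ 1 * s₀`, so `0 ≤ 1`. Hence a localizable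
bound `s = 1 + t` of `r` has `0 ≤ s` and `0 ≤ r + s`. Dividing `k = q n + m` with `m < n`,
`k r + n s = q (n r) + m (r + s) + (n - m) s ≥ 0` for every `k`, so `0 ≤ r` by the
archimedean property.
-/

theorem nsmul_add_nsmul_nonneg {M : Type*} [AddCommMonoid M] [Preorder M] [AddLeftMono M]
    {n : ℕ} (hn : 0 < n) {r s : M} (hnr : 0 ≤ n • r) (hrs : 0 ≤ r + s) (hs : 0 ≤ s) (k : ℕ) :
    0 ≤ k • r + n • s := by
  obtain ⟨l, hl⟩ := Nat.exists_eq_add_of_le (Nat.mod_lt k hn).le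
  have hk := Nat.div_add_mod k n
  generalize k / n = q, k % n = m at hk hl
  subst hk hl
  have hsplit : ((m + l) * q + m) • r + (m + l) • s = q • ((m + l) • r) + m • (r + s) + l • s := by
    simp only [add_nsmul, mul_nsmul, nsmul_add]
    abel
  rw [hsplit]
  exact add_nonneg (add_nonneg (nsmul_nonneg hnr q) (nsmul_nonneg hrs m)) (nsmul_nonneg hs l)

/-- In an archimedean localizable ring with translation-invariant partial order,
every positive natural number is a localizable element. -/
theorem stmt_2 (R : Type*) [CommRing R] [PartialOrder R]
    [CovariantClass R R (· + ·) (· ≤ ·)]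
    (harch : ∀ g h : R, (∀ k : ℕ, 1 ≤ k → 0 ≤ (k : R) * g + h) → 0 ≤ g)
    (hloc : ∀ r : R, ∃ s : R, (∃ t : R, 0 ≤ t ∧ s = 1 + t) ∧
      (∀ r' : R, 0 ≤ r' * s → 0 ≤ r') ∧ -s ≤ r ∧ r ≤ s) :
    ∀ n : ℕ, 1 ≤ n → ∀ r : R, 0 ≤ (n : R) * r → 0 ≤ r := by
  intro n hn r hnr
  obtain ⟨s₀, -, hs₀_loc, -, hs₀⟩ := hloc 0
  have h1 : (0 : R) ≤ 1 := hs₀_loc 1 (by rwa [one_mul])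
  obtain ⟨s, ⟨t, ht, rfl⟩, -, hrs, -⟩ := hloc r
  refine harch r (n * (1 + t)) fun k _ => ?_
  simpa only [nsmul_eq_mul] using nsmul_add_nsmul_nonneg hn (by rwa [nsmul_eq_mul])
    (neg_le_iff_add_nonneg.mp hrs) (add_nonneg h1 ht) k
end

section
/- Let R be a commutative ring with a translation-invariant partial order on its additive group such that the positive cone R⁺ is closed under multiplication. If R is archimedean and localizable, then r² ∈ R⁺ for every r ∈ R; in particular R is a partially ordered commutative ring. -/
/-!
A localizable bound `s` of `0` satisfies `1 * s ∈ R⁺`, so `0 ≤ 1` and `R` is an ordered ring in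
Mathlib's sense (`IsOrderedRing`, which does not include `0 ≤ r²`).
Let `s = 1 + t` be a localizable bound of `r`, so that `u = s + r` and `v = s - r` lie in `R⁺`.
For odd `N` the homogenised variance identity of the binomial distribution,
`∑ₐ ((2a - N)² - 1) C(N, a) uᵃ v^(N-a) = (N - 1) (u + v)^(N-2) ((u + v)² + N (u - v)²)`,
has nonnegative integer coefficients on the left, since `2a - N` is odd. With `u + v = 2s` and
`u - v = 2r`, its right side is a positive integer times `s^(N-2) (N r² + s²)`. Localizability
cancels the power of `s`, and the integer factor can be divided out because every element lies
between `-σ` and `σ` for some `σ ∈ R⁺`, so the archimedean property applies. Thus `N r² + s² ∈ R⁺`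
for all odd `N ≥ 3`, and the archimedean property yields `2 r² ∈ R⁺`, hence `r² ∈ R⁺`.
-/

open Finset

section CommSemiring

variable {R : Type*} [CommSemiring R]

theorem sum_range_natCast_mul_mul_choose (f : ℕ → R) (n : ℕ) :
    ∑ a ∈ range (n + 2), (a : R) * (f a * (n + 1).choose a) =
      (n + 1) * ∑ a ∈ range (n + 1), f (a + 1) * n.choose a := by
  rw [sum_range_succ', mul_sum]
  simp only [Nat.cast_zero, zero_mul, add_zero]
  refine sum_congr rfl fun a _ => ?_
  calc ((a + 1 : ℕ) : R) * (f (a + 1) * (n + 1).choose (a + 1))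
      = f (a + 1) * ((n + 1).choose (a + 1) * (a + 1) : ℕ) := by push_cast; ring
    _ = f (a + 1) * ((n + 1) * n.choose a : ℕ) := by rw [Nat.add_one_mul_choose_eq]
    _ = _ := by push_cast; ring

theorem sum_range_natCast_mul_pow_mul_pow_mul_choose (u v : R) (n : ℕ) :
    ∑ a ∈ range (n + 2), (a : R) * (u ^ a * v ^ (n + 1 - a) * (n + 1).choose a) =
      (n + 1) * u * (u + v) ^ n := by
  rw [sum_range_natCast_mul_mul_choose, add_pow, mul_assoc, mul_sum _ _ u]
  congr 1
  refine sum_congr rfl fun a _ => ?_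
  rw [Nat.add_sub_add_right, pow_succ]
  ring

end CommSemiring

section CommRing

variable {R : Type*} [CommRing R]

theorem sum_range_natCast_mul_sub_one_mul_pow_mul_pow_mul_choose (u v : R) (n : ℕ) :
    ∑ a ∈ range (n + 3), (a : R) * (a - 1) * (u ^ a * v ^ (n + 2 - a) * (n + 2).choose a) =
      (n + 2) * (n + 1) * u ^ 2 * (u + v) ^ n := by
  have h₁ : ∀ a ∈ range (n + 3), (a : R) * (a - 1) * (u ^ a * v ^ (n + 2 - a) * (n + 2).choose a) =
      a * ((a - 1) * (u ^ a * v ^ (n + 2 - a)) * (n + 2).choose a) := fun _ _ => by ring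
  have h₂ : ∀ a ∈ range (n + 2),
      (((a + 1 : ℕ) : R) - 1) * (u ^ (a + 1) * v ^ (n + 1 + 1 - (a + 1))) * (n + 1).choose a =
        u * (a * (u ^ a * v ^ (n + 1 - a) * (n + 1).choose a)) := fun a _ => by
    rw [Nat.add_sub_add_right]; push_cast; ring
  rw [sum_congr rfl h₁, show n + 3 = n + 1 + 2 from rfl, show n + 2 = n + 1 + 1 from rfl,
    sum_range_natCast_mul_mul_choose, sum_congr rfl h₂, ← mul_sum,
    sum_range_natCast_mul_pow_mul_pow_mul_choose]
  push_cast
  ring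

theorem sum_range_sq_sub_one_mul_pow_mul_pow_mul_choose (u v : R) (n : ℕ) :
    ∑ a ∈ range (n + 3),
        ((2 * a - (n + 2)) ^ 2 - 1 : R) * (u ^ a * v ^ (n + 2 - a) * (n + 2).choose a) =
      (n + 1) * (u + v) ^ n * ((u + v) ^ 2 + (n + 2) * (u - v) ^ 2) := by
  have h : ∀ a ∈ range (n + 3),
      ((2 * a - (n + 2)) ^ 2 - 1 : R) * (u ^ a * v ^ (n + 2 - a) * (n + 2).choose a) =
        4 * ((a : R) * (a - 1) * (u ^ a * v ^ (n + 2 - a) * (n + 2).choose a))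
          - 4 * (n + 1) * (a * (u ^ a * v ^ (n + 1 + 1 - a) * (n + 1 + 1).choose a))
          + (n + 1) * (n + 3) * (u ^ a * v ^ (n + 2 - a) * (n + 2).choose a) :=
    fun _ _ => by ring
  rw [sum_congr rfl h, sum_add_distrib, sum_sub_distrib, ← mul_sum, ← mul_sum, ← mul_sum,
    sum_range_natCast_mul_sub_one_mul_pow_mul_pow_mul_choose, show n + 3 = n + 1 + 2 from rfl,
    sum_range_natCast_mul_pow_mul_pow_mul_choose, show n + 1 + 2 = n + 2 + 1 from rfl, ← add_pow]
  push_cast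
  ring

end CommRing

theorem nonneg_of_nsmul_nonneg {G : Type*} [AddCommGroup G] [PartialOrder G]
    [IsOrderedAddMonoid G]
    (harch : ∀ g h : G, (∀ k : ℕ, 1 ≤ k → 0 ≤ k • g + h) → 0 ≤ g) {x σ : G} (hσ : 0 ≤ σ)
    (hx : -σ ≤ x) {n : ℕ} (hn : n ≠ 0) (hnx : 0 ≤ n • x) : 0 ≤ x := by
  have hxσ : 0 ≤ x + σ := neg_le_iff_add_nonneg.mp hx
  suffices ∀ k : ℕ, 0 ≤ k • x + n • σ from harch x _ fun k _ => this k
  intro k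
  induction k using Nat.strong_induction_on with
  | _ k ih =>
    rcases lt_or_ge k n with hk | hk
    · obtain ⟨τ, rfl⟩ := Nat.exists_eq_add_of_lt hk
      calc 0 ≤ k • (x + σ) + (τ + 1) • σ := add_nonneg (nsmul_nonneg hxσ _) (nsmul_nonneg hσ _)
        _ = _ := by module
    · obtain ⟨j, rfl⟩ := Nat.exists_eq_add_of_le hk
      calc 0 ≤ n • x + (j • x + n • σ) := add_nonneg hnx (ih j (by omega))
        _ = _ := by module

section OrderedRing

variable {R : Type*} [CommRing R] [PartialOrder R] [IsOrderedRing R]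

theorem sq_two_mul_sub_sub_one_nonneg_of_odd {n : ℕ} (hn : Odd n) (a : ℕ) :
    (0 : R) ≤ (2 * a - n) ^ 2 - 1 := by
  obtain ⟨m, rfl⟩ := hn
  have hz : (2 * a - (2 * m + 1) : ℤ) ≠ 0 := by omega
  obtain ⟨k, hk⟩ := Int.eq_ofNat_of_zero_le
    (sub_nonneg.2 ((one_le_sq_iff_one_le_abs _).2 (Int.one_le_abs hz)))
  have hk' : ((2 * a - (2 * m + 1)) ^ 2 - 1 : R) = k := by
    exact_mod_cast congrArg (Int.cast : ℤ → R) hk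
  push_cast
  exact hk' ▸ Nat.cast_nonneg k

theorem natCast_mul_add_two_mul_sq_add_sq_mul_pow_nonneg {r s : R} (hsr : -s ≤ r) (hrs : r ≤ s)
    {n : ℕ} (hn : Odd n) :
    0 ≤ ((n + 1) * 2 ^ (n + 2) : ℕ) * (((n + 2) * r ^ 2 + s ^ 2) * s ^ n : R) := by
  have hu : 0 ≤ s + r := neg_le_iff_add_nonneg'.1 hsr
  have hv : 0 ≤ s - r := sub_nonneg.2 hrs
  have key : ((n + 1) * 2 ^ (n + 2) : ℕ) * (((n + 2) * r ^ 2 + s ^ 2) * s ^ n : R) =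
      ∑ a ∈ range (n + 3), ((2 * a - (n + 2)) ^ 2 - 1 : R) *
        ((s + r) ^ a * (s - r) ^ (n + 2 - a) * (n + 2).choose a) := by
    rw [sum_range_sq_sub_one_mul_pow_mul_pow_mul_choose]
    push_cast
    ring
  rw [key]
  refine sum_nonneg fun a _ => mul_nonneg ?_ (by positivity)
  simpa using sq_two_mul_sub_sub_one_nonneg_of_odd (R := R) (hn.add_even even_two) a

end OrderedRing

theorem nonneg_of_mul_pow_nonneg {M : Type*} [Monoid M] [Zero M] [LE M] {s : M}
    (hs : ∀ y : M, 0 ≤ y * s → 0 ≤ y) (n : ℕ) {y : M} (h : 0 ≤ y * s ^ n) : 0 ≤ y := by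
  induction n generalizing y with
  | zero => simpa using h
  | succ n ih => exact ih (hs _ (by rwa [mul_assoc, ← pow_succ]))

/-- If the positive cone is closed under multiplication and the ring is archimedean
and localizable, then all squares are positive. -/
theorem stmt_3 (R : Type*) [CommRing R] [PartialOrder R]
    [CovariantClass R R (· + ·) (· ≤ ·)]
    (hmul : ∀ a b : R, 0 ≤ a → 0 ≤ b → 0 ≤ a * b)
    (harch : ∀ g h : R, (∀ k : ℕ, 1 ≤ k → 0 ≤ (k : R) * g + h) → 0 ≤ g)
    (hloc : ∀ r : R, ∃ s : R, (∃ t : R, 0 ≤ t ∧ s = 1 + t) ∧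
      (∀ r' : R, 0 ≤ r' * s → 0 ≤ r') ∧ -s ≤ r ∧ r ≤ s) :
    ∀ r : R, 0 ≤ r ^ 2 := by
  have : IsOrderedAddMonoid R := { add_le_add_left := fun _ _ h c => add_le_add_left h c }
  have : ZeroLEOneClass R := by
    obtain ⟨s, -, hs, hs0, -⟩ := hloc 0
    exact ⟨by simpa using hs 1 (by simpa using hs0)⟩
  have : IsOrderedRing R := .of_mul_nonneg hmul
  have hdiv : ∀ {n : ℕ} {x : R}, n ≠ 0 → 0 ≤ (n : R) * x → 0 ≤ x := by
    intro n x hn hx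
    obtain ⟨s, ⟨t, ht, rfl⟩, -, hsx, -⟩ := hloc x
    refine nonneg_of_nsmul_nonneg (fun g h H => harch g h fun k hk => ?_)
      (add_nonneg zero_le_one ht) hsx hn (by rwa [nsmul_eq_mul])
    simpa only [nsmul_eq_mul] using H k hk
  intro r
  obtain ⟨s, -, hs, hsr, hrs⟩ := hloc r
  have hodd {n : ℕ} (hn : Odd n) : 0 ≤ (n + 2) * r ^ 2 + s ^ 2 :=
    nonneg_of_mul_pow_nonneg hs n
      (hdiv (by positivity) (natCast_mul_add_two_mul_sq_add_sq_mul_pow_nonneg hsr hrs hn))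
  -- `k • 2r² + (r² + s²) = (2k + 1) r² + s²`, so only odd multiples of `r²` are needed.
  refine hdiv two_ne_zero (harch _ (r ^ 2 + s ^ 2) fun k hk => ?_)
  obtain ⟨m, rfl⟩ := Nat.exists_eq_add_of_le' hk
  convert hodd (odd_two_mul_add_one m) using 1
  push_cast
  ring
end

section
/- Let R be a commutative ring with a translation-invariant partial order on its additive group such that R⁺ is stable under multiplication with squares (r²s ∈ R⁺ whenever r ∈ R, s ∈ R⁺). If R is archimedean and localizable, then pq ∈ R⁺ for all p, q ∈ R⁺; in particular R is a partially ordered commutative ring. -/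
/-!
If `W` cancels from nonnegative products and `u, v ≥ 0` with `u + v = W`, then `uv ≥ 0`,
because `uv · W = u²v + v²u`. So `x ↦ 4x(W - x)` maps `[0, W]` into `[0, W²]`, and the identity
`(16c · xy + W²) · W² = c · 4x(W - x) · 4y(W - y) + W⁴ + 16c · (y² x(W - x) + x² y(W - y) + x²y²)`
lifts `c · xy + W² ≥ 0` on `[0, W]` to `16c · xy + W² ≥ 0`, starting from
`4xy + W² = (W - x - y)² + (x + y)² + 2x(W - x) + 2y(W - y)`. With `W` a localizable bound of
`p + q` this gives `k · pq + W² ≥ 0` for all `k`, and the archimedean property gives `pq ≥ 0`.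
-/

section

variable {R : Type*} [CommRing R] [Preorder R]

/-- The cancellation property of the paper's localizable elements: these are the `s ∈ 1 + R⁺`
with `IsNonnegCancel s`. -/
def IsNonnegCancel (s : R) : Prop := ∀ r : R, 0 ≤ r * s → 0 ≤ r

namespace IsNonnegCancel

theorem zero_le_one {s : R} (hs : IsNonnegCancel s) (h : 0 ≤ s) : (0 : R) ≤ 1 :=
  hs 1 (by rwa [one_mul])

theorem mul {s t : R} (hs : IsNonnegCancel s) (ht : IsNonnegCancel t) :
    IsNonnegCancel (s * t) :=
  fun r h => ht r (hs (r * t) (by rwa [mul_right_comm, mul_assoc]))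

end IsNonnegCancel

variable [AddLeftMono R]

theorem natCast_mul_nonneg (n : ℕ) {x : R} (hx : 0 ≤ x) : 0 ≤ (n : R) * x := by
  simpa only [nsmul_eq_mul] using nsmul_nonneg hx n

theorem nonneg_of_natCast_mul_nonneg
    (harch : ∀ g h : R, (∀ k : ℕ, 1 ≤ k → 0 ≤ (k : R) * g + h) → 0 ≤ g)
    (hbdd : ∀ r : R, ∃ s : R, 0 ≤ s ∧ -s ≤ r) {K : ℕ} (hK : 0 < K) {r : R}
    (h : 0 ≤ (K : R) * r) : 0 ≤ r := by
  obtain ⟨s, hs, hrs⟩ := hbdd r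
  replace hrs : 0 ≤ r + s := neg_le_iff_add_nonneg.mp hrs
  refine harch r (K * s) fun j _ => ?_
  have hmod : j % K ≤ K := (Nat.mod_lt j hK).le
  have hj : (j : R) = K * (j / K : ℕ) + (j % K : ℕ) := by
    rw [← Nat.cast_mul, ← Nat.cast_add, Nat.div_add_mod]
  have key : (j : R) * r + K * s
      = (j / K : ℕ) * (K * r) + (j % K : ℕ) * (r + s) + (K - j % K : ℕ) * s := by
    rw [Nat.cast_sub hmod, hj]; ring
  rw [key]
  exact add_nonneg (add_nonneg (natCast_mul_nonneg _ h) (natCast_mul_nonneg _ hrs))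
    (natCast_mul_nonneg _ hs)

theorem natCast_mul_add_nonneg_of_le
    (harch : ∀ g h : R, (∀ k : ℕ, 1 ≤ k → 0 ≤ (k : R) * g + h) → 0 ≤ g)
    (hbdd : ∀ r : R, ∃ s : R, 0 ≤ s ∧ -s ≤ r) {k K : ℕ} (hk : 0 < k) (hkK : k ≤ K)
    {g h : R} (hh : 0 ≤ h) (hK : 0 ≤ (K : R) * g + h) : 0 ≤ (k : R) * g + h := by
  refine nonneg_of_natCast_mul_nonneg harch hbdd (hk.trans_le hkK) ?_
  have key : (K : R) * (k * g + h) = k * (K * g + h) + (K - k : ℕ) * h := by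
    rw [Nat.cast_sub hkK]; ring
  rw [key]
  exact add_nonneg (natCast_mul_nonneg _ hK) (natCast_mul_nonneg _ hh)

theorem mul_nonneg_of_add_eq (hsq : ∀ r s : R, 0 ≤ s → 0 ≤ r ^ 2 * s) {W : R}
    (hW : IsNonnegCancel W) {u v : R} (hu : 0 ≤ u) (hv : 0 ≤ v) (huv : u + v = W) :
    0 ≤ u * v :=
  hW _ <| by
    rw [← huv, show u * v * (u + v) = u ^ 2 * v + v ^ 2 * u by ring]
    exact add_nonneg (hsq u v hv) (hsq v u hu)

theorem four_mul_mul_sub_mem_Icc (hsq : ∀ r s : R, 0 ≤ s → 0 ≤ r ^ 2 * s) {W : R}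
    (hW : IsNonnegCancel W) {x : R} (hx : 0 ≤ x) (hxW : x ≤ W) :
    4 * (x * (W - x)) ∈ Set.Icc 0 (W ^ 2) := by
  have h01 := hW.zero_le_one (hx.trans hxW)
  constructor
  · rw [show (4 : R) = 2 ^ 2 by norm_num]
    exact hsq 2 _ (mul_nonneg_of_add_eq hsq hW hx (sub_nonneg.mpr hxW) (add_sub_cancel x W))
  · rw [← sub_nonneg, show W ^ 2 - 4 * (x * (W - x)) = (W - 2 * x) ^ 2 * 1 by ring]
    exact hsq _ _ h01

theorem four_mul_mul_add_sq_nonneg (hsq : ∀ r s : R, 0 ≤ s → 0 ≤ r ^ 2 * s) {W : R}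
    (hW : IsNonnegCancel W) {x y : R} (hx : 0 ≤ x) (hy : 0 ≤ y) (hxW : x ≤ W) (hyW : y ≤ W) :
    0 ≤ 4 * (x * y) + W ^ 2 := by
  have h01 := hW.zero_le_one (hx.trans hxW)
  have hxx := mul_nonneg_of_add_eq hsq hW hx (sub_nonneg.mpr hxW) (add_sub_cancel x W)
  have hyy := mul_nonneg_of_add_eq hsq hW hy (sub_nonneg.mpr hyW) (add_sub_cancel y W)
  rw [show 4 * (x * y) + W ^ 2 = (W - x - y) ^ 2 * 1 + (x + y) ^ 2 * 1
      + (x * (W - x) + x * (W - x)) + (y * (W - y) + y * (W - y)) by ring]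
  exact add_nonneg (add_nonneg (add_nonneg (hsq _ _ h01) (hsq _ _ h01))
    (add_nonneg hxx hxx)) (add_nonneg hyy hyy)

theorem natCast_mul_mul_add_sq_nonneg (hsq : ∀ r s : R, 0 ≤ s → 0 ≤ r ^ 2 * s) (n : ℕ)
    {W : R} (hW : IsNonnegCancel W) {x y : R} (hx : 0 ≤ x) (hy : 0 ≤ y) (hxW : x ≤ W)
    (hyW : y ≤ W) : 0 ≤ ((4 * 16 ^ n : ℕ) : R) * (x * y) + W ^ 2 := by
  induction n generalizing W x y with
  | zero => simpa using four_mul_mul_add_sq_nonneg hsq hW hx hy hxW hyW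
  | succ n ih =>
    obtain ⟨hx₀, hx₁⟩ := four_mul_mul_sub_mem_Icc hsq hW hx hxW
    obtain ⟨hy₀, hy₁⟩ := four_mul_mul_sub_mem_Icc hsq hW hy hyW
    have h01 := hW.zero_le_one (hx.trans hxW)
    have hxx := mul_nonneg_of_add_eq hsq hW hx (sub_nonneg.mpr hxW) (add_sub_cancel x W)
    have hyy := mul_nonneg_of_add_eq hsq hW hy (sub_nonneg.mpr hyW) (add_sub_cancel y W)
    have hrest : 0 ≤ ((4 * 16 ^ (n + 1) : ℕ) : R)
        * (y ^ 2 * (x * (W - x)) + x ^ 2 * (y * (W - y)) + (x * y) ^ 2 * 1) :=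
      natCast_mul_nonneg _ <|
        add_nonneg (add_nonneg (hsq y _ hxx) (hsq x _ hyy)) (hsq (x * y) _ h01)
    refine hW.mul hW _ ?_
    have key : (((4 * 16 ^ (n + 1) : ℕ) : R) * (x * y) + W ^ 2) * (W * W)
        = (((4 * 16 ^ n : ℕ) : R) * (4 * (x * (W - x)) * (4 * (y * (W - y)))) + (W ^ 2) ^ 2)
          + ((4 * 16 ^ (n + 1) : ℕ) : R)
            * (y ^ 2 * (x * (W - x)) + x ^ 2 * (y * (W - y)) + (x * y) ^ 2 * 1) := by
      push_cast; ring
    rw [key]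
    exact add_nonneg (ih (by simpa [sq] using hW.mul hW) hx₀ hy₀ hx₁ hy₁) hrest

end

/-- If the positive cone is stable under multiplication with squares and the ring is
archimedean and localizable, then the positive cone is closed under multiplication. -/
theorem stmt_4 (R : Type*) [CommRing R] [PartialOrder R]
    [CovariantClass R R (· + ·) (· ≤ ·)]
    (hsqmul : ∀ r s : R, 0 ≤ s → 0 ≤ r ^ 2 * s)
    (harch : ∀ g h : R, (∀ k : ℕ, 1 ≤ k → 0 ≤ (k : R) * g + h) → 0 ≤ g)
    (hloc : ∀ r : R, ∃ s : R, (∃ t : R, 0 ≤ t ∧ s = 1 + t) ∧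
      (∀ r' : R, 0 ≤ r' * s → 0 ≤ r') ∧ -s ≤ r ∧ r ≤ s) :
    ∀ p q : R, 0 ≤ p → 0 ≤ q → 0 ≤ p * q := by
  have h01 : (0 : R) ≤ 1 := by
    obtain ⟨s, -, hs, hs₀, -⟩ := hloc 0
    exact IsNonnegCancel.zero_le_one hs (neg_nonpos.mp hs₀)
  have hbdd : ∀ r : R, ∃ s : R, 0 ≤ s ∧ -s ≤ r := fun r => by
    obtain ⟨s, ⟨t, ht, rfl⟩, -, hs, -⟩ := hloc r
    exact ⟨1 + t, add_nonneg h01 ht, hs⟩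
  intro p q hp hq
  obtain ⟨s, -, hs, -, hpqs⟩ := hloc (p + q)
  have hps : p ≤ s := (le_add_of_nonneg_right hq).trans hpqs
  have hqs : q ≤ s := (le_add_of_nonneg_left hp).trans hpqs
  refine harch (p * q) (s ^ 2) fun k hk => natCast_mul_add_nonneg_of_le harch hbdd hk ?_
    (by simpa using hsqmul s 1 h01) (natCast_mul_mul_add_sq_nonneg hsqmul k hs hp hq hps hqs)
  calc k ≤ 16 ^ k := (Nat.lt_pow_self (by norm_num)).le
    _ ≤ 4 * 16 ^ k := Nat.le_mul_of_pos_left _ (by norm_num)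
end

section
/- Let R be a partially ordered commutative ring and R_loc its localization at the multiplicative set Loc(R), with elements written p/q (p ∈ R, q ∈ Loc(R)) where p/q = r/s iff ps = qr. Set R_loc⁺ := {p/q : p ∈ R⁺, q ∈ Loc(R)}. Then an element p/q (p ∈ R, q ∈ Loc(R)) satisfies p/q ∈ R_loc⁺ if and only if p ∈ R⁺; consequently R_loc⁺ ∩ (−R_loc⁺) = {0}, R_loc is a partially ordered commutative ring, and the canonical map ι: R → R_loc, r ↦ r/1 is a positive ring morphism and an order embedding (ι(r) ∈ R_loc⁺ iff r ∈ R⁺). -/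
/-- The localization of a partially ordered commutative ring at its monoid of
localizable elements is a partially ordered commutative ring, and the canonical map
is a positive order embedding. -/
theorem stmt_10 (R : Type*) [CommRing R] [PartialOrder R]
    [CovariantClass R R (· + ·) (· ≤ ·)]
    (hsq : ∀ r : R, 0 ≤ r ^ 2)
    (hmul : ∀ a b : R, 0 ≤ a → 0 ≤ b → 0 ≤ a * b)
    (L : Submonoid R)
    (hL : (L : Set R) =
      {s : R | (∃ t : R, 0 ≤ t ∧ s = 1 + t) ∧ ∀ r : R, 0 ≤ r * s → 0 ≤ r}) :
    let C : Set (Localization L) :=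
      {x : Localization L | ∃ (p : R) (q : L), 0 ≤ p ∧ x = Localization.mk p q}
    -- p/q ∈ R_loc⁺ iff p ∈ R⁺
    (∀ (p : R) (q : L), Localization.mk p q ∈ C ↔ 0 ≤ p) ∧
    -- R_loc⁺ ∩ (−R_loc⁺) = {0}
    (∀ x : Localization L, x ∈ C → -x ∈ C → x = 0) ∧
    -- R_loc is a partially ordered commutative ring with positive cone C
    ((0 : Localization L) ∈ C ∧
      (∀ x ∈ C, ∀ y ∈ C, x + y ∈ C) ∧
      (∀ x ∈ C, ∀ y ∈ C, x * y ∈ C) ∧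
      (∀ x : Localization L, x ^ 2 ∈ C)) ∧
    -- the canonical map r ↦ r/1 is positive and an order embedding
    (∀ r : R, algebraMap R (Localization L) r ∈ C ↔ 0 ≤ r) := by
  intro C
  have h1 : (0 : R) ≤ 1 := by simpa using hsq 1
  have hLmem : ∀ q : L, (∃ t : R, 0 ≤ t ∧ (q : R) = 1 + t) ∧
      ∀ r : R, 0 ≤ r * (q : R) → 0 ≤ r := fun q => by
    have : (q : R) ∈ (L : Set R) := q.2
    rw [hL] at this; exact this
  have hLpos : ∀ q : L, (0 : R) ≤ (q : R) := fun q => by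
    obtain ⟨⟨t, ht, hs⟩, _⟩ := hLmem q
    rw [hs]
    exact le_trans h1 (le_add_of_nonneg_right ht)
  have hLloc : ∀ (q : L) (r : R), 0 ≤ r * (q : R) → 0 ≤ r := fun q => (hLmem q).2
  have hLreg : ∀ (q : L) (r : R), r * (q : R) = 0 → r = 0 := by
    intro q r h
    have ha : (0 : R) ≤ r := hLloc q r (le_of_eq h.symm)
    have hb : (0 : R) ≤ -r := hLloc q (-r) (by rw [neg_mul, h, neg_zero])
    exact le_antisymm (neg_nonneg.mp hb) ha
  -- equality of fractions is cross-multiplication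
  have key : ∀ (p p' : R) (q q' : L), Localization.mk p q = Localization.mk p' q' →
      p * (q' : R) = p' * (q : R) := by
    intro p p' q q' h
    rw [Localization.mk_eq_mk_iff, Localization.r_iff_exists] at h
    obtain ⟨c, hc⟩ := h
    have h0 : ((q' : R) * p - (q : R) * p') * (c : R) = 0 := by
      have : (c : R) * ((q' : R) * p) - (c : R) * ((q : R) * p') = 0 := by
        rw [hc, sub_self]
      calc ((q' : R) * p - (q : R) * p') * (c : R)
          = (c : R) * ((q' : R) * p) - (c : R) * ((q : R) * p') := by ring
        _ = 0 := this
    have h2 := sub_eq_zero.mp (hLreg c _ h0)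
    rw [mul_comm p, mul_comm p']; exact h2
  have main : ∀ (p : R) (q : L), Localization.mk p q ∈ C ↔ 0 ≤ p := by
    intro p q
    constructor
    · rintro ⟨p', q', hp', hx⟩
      have heq := key p p' q q' hx
      have hpos : (0 : R) ≤ p' * (q : R) := hmul _ _ hp' (hLpos q)
      exact hLloc q' p (heq ▸ hpos)
    · intro hp; exact ⟨p, q, hp, rfl⟩
  refine ⟨main, ?_, ⟨?_, ?_, ?_, ?_⟩, ?_⟩
  · -- C ∩ -C = {0}
    rintro x ⟨p, q, hp, rfl⟩ hneg
    rw [Localization.neg_mk] at hneg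
    have hnp : (0 : R) ≤ -p := (main _ _).mp hneg
    have : p = 0 := le_antisymm (neg_nonneg.mp hnp) hp
    rw [this, Localization.mk_zero]
  · exact ⟨0, 1, le_refl 0, (Localization.mk_zero 1).symm⟩
  · rintro x ⟨p, q, hp, rfl⟩ y ⟨p', q', hp', rfl⟩
    rw [Localization.add_mk]
    refine (main _ _).mpr ?_
    have h1' : (0 : R) ≤ (q : R) * p' := hmul _ _ (hLpos q) hp'
    have h2' : (0 : R) ≤ (q' : R) * p := hmul _ _ (hLpos q') hp
    calc (0 : R) = 0 + 0 := by rw [add_zero]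
      _ ≤ (q : R) * p' + (q' : R) * p := add_le_add h1' h2'
  · rintro x ⟨p, q, hp, rfl⟩ y ⟨p', q', hp', rfl⟩
    rw [Localization.mk_mul]
    exact (main _ _).mpr (hmul _ _ hp hp')
  · intro x
    induction x using Localization.induction_on with
    | H y =>
      rcases y with ⟨p, q⟩
      rw [sq, Localization.mk_mul]
      exact (main _ _).mpr (by simpa [sq] using hsq p)
  · intro r
    rw [← Localization.mk_one_eq_algebraMap]
    exact main r 1
end

section
/- Let X be a Baire space (e.g., a compact Hausdorff space). Then the partially ordered commutative ring C_ae(X) of almost everywhere defined continuous real-valued functions on X is archimedean: if equivalence classes [f], [g] ∈ C_ae(X) satisfy k[f] + [g] ≥ 0 for all k ∈ ℕ, then [f] ≥ 0. -/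
/-- The ring of almost everywhere defined continuous functions on a Baire space is
archimedean: if `k·[f] + [g] ≥ 0` for all `k ∈ ℕ` (i.e. for every `k` the function
`k·f + g` is nonnegative on some dense open set contained in the domains), then
`[f] ≥ 0` (i.e. `f` is nonnegative on some dense open subset of its domain). -/
theorem stmt_13 (X : Type*) [TopologicalSpace X] [BaireSpace X]
    (f g : X → ℝ) (Af Ag : Set X)
    (hAfo : IsOpen Af) (hAfd : Dense Af) (hAgo : IsOpen Ag) (hAgd : Dense Ag)
    (hf : ContinuousOn f Af) (hg : ContinuousOn g Ag)
    (h : ∀ k : ℕ, 1 ≤ k → ∃ A : Set X, IsOpen A ∧ Dense A ∧ A ⊆ Af ∩ Ag ∧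
      ∀ x ∈ A, 0 ≤ (k : ℝ) * f x + g x) :
    ∃ A : Set X, IsOpen A ∧ Dense A ∧ A ⊆ Af ∧ ∀ x ∈ A, 0 ≤ f x := by
  choose A hAo hAd hAsub hApos using fun k : ℕ => h (k + 1) (Nat.le_add_left 1 k)
  set D : Set X := ⋂ k, A k with hD
  have hDd : Dense D := dense_iInter_of_isOpen hAo hAd
  -- f is nonnegative on D
  have hDpos : ∀ y ∈ D, 0 ≤ f y := by
    intro y hy
    by_contra hneg
    push_neg at hneg
    obtain ⟨n, hn⟩ := exists_nat_gt (g y / (-f y))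
    have hy' : y ∈ A n := Set.mem_iInter.mp hy n
    have h1 := hApos n y hy'
    have h2 : g y / (-f y) < (n : ℝ) + 1 := by
      have : (n : ℝ) ≤ (n : ℝ) + 1 := by linarith
      linarith
    have h3 : g y < ((n : ℝ) + 1) * (-f y) :=
      (div_lt_iff₀ (by linarith)).mp h2
    push_cast at h1
    nlinarith
  -- extend to Af by continuity
  refine ⟨Af, hAfo, hAfd, le_refl _, ?_⟩
  intro x hx
  by_contra hneg
  push_neg at hneg
  have hcont : ContinuousAt f x := hf.continuousAt (hAfo.mem_nhds hx)
  have : ∀ᶠ y in nhds x, f y < 0 := hcont.eventually_lt continuousAt_const hneg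
  obtain ⟨U, hUlt, hUo, hUx⟩ := eventually_nhds_iff.mp this
  obtain ⟨y, hyD, hyU⟩ := hDd.exists_mem_open hUo ⟨x, hUx⟩
  exact absurd (hDpos y hyD) (not_le.mpr (hUlt y hyU))
end

section
/- Let X be a topological space and a ∈ C_ae(X) an equivalence class of almost everywhere defined continuous real-valued functions on X. Then a has a unique representative a_max ∈ a with maximal domain: a_max is continuous on a dense open subset of X, and every representative f ∈ a satisfies f = a_max restricted to dom f; in particular dom f ⊆ dom a_max. -/
open Filter Topology

/-- Two almost everywhere defined continuous functions are equivalent if they agree on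
some dense open set contained in both domains. -/
def AeEquiv {X : Type*} [TopologicalSpace X] (A : Set X) (f : X → ℝ) (B : Set X)
    (g : X → ℝ) : Prop :=
  ∃ C : Set X, IsOpen C ∧ Dense C ∧ C ⊆ A ∩ B ∧ ∀ x ∈ C, f x = g x

/-- Two continuous functions on open sets agreeing on a dense set agree on the
intersection of their domains. -/
lemma eq_on_inter_of_dense {X : Type*} [TopologicalSpace X] {A B C : Set X} {f g : X → ℝ}
    (hA : IsOpen A) (hB : IsOpen B) (hf : ContinuousOn f A) (hg : ContinuousOn g B)
    (hCd : Dense C) (hfg : ∀ x ∈ C, f x = g x) {x : X} (hxA : x ∈ A) (hxB : x ∈ B) :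
    f x = g x := by
  have hfx : ContinuousAt f x := hf.continuousAt (hA.mem_nhds hxA)
  have hgx : ContinuousAt g x := hg.continuousAt (hB.mem_nhds hxB)
  have hne : (𝓝[C] x).NeBot := mem_closure_iff_nhdsWithin_neBot.1 (hCd x)
  have h1 : Tendsto f (𝓝[C] x) (𝓝 (f x)) := hfx.tendsto.mono_left nhdsWithin_le_nhds
  have h2 : Tendsto f (𝓝[C] x) (𝓝 (g x)) := by
    refine (hgx.tendsto.mono_left nhdsWithin_le_nhds).congr' ?_
    filter_upwards [self_mem_nhdsWithin] with y hy using (hfg y hy).symm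
  exact tendsto_nhds_unique h1 h2

/-- Every equivalence class of almost everywhere defined continuous functions on `X`
has a unique representative with maximal domain: every representative is a restriction
of it. -/
theorem stmt_15 (X : Type*) [TopologicalSpace X]
    (A₀ : Set X) (f₀ : X → ℝ) (hA₀o : IsOpen A₀) (hA₀d : Dense A₀)
    (hf₀ : ContinuousOn f₀ A₀) :
    ∃ (Amax : Set X) (fmax : X → ℝ),
      (IsOpen Amax ∧ Dense Amax ∧ ContinuousOn fmax Amax ∧ AeEquiv Amax fmax A₀ f₀ ∧
        ∀ (A : Set X) (f : X → ℝ), IsOpen A → Dense A → ContinuousOn f A →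
          AeEquiv A f A₀ f₀ → A ⊆ Amax ∧ ∀ x ∈ A, f x = fmax x) ∧
      -- uniqueness: any representative with the same maximality property has the same
      -- domain and the same values on it
      ∀ (A' : Set X) (f' : X → ℝ),
        (IsOpen A' ∧ Dense A' ∧ ContinuousOn f' A' ∧ AeEquiv A' f' A₀ f₀ ∧
          ∀ (A : Set X) (f : X → ℝ), IsOpen A → Dense A → ContinuousOn f A →
            AeEquiv A f A₀ f₀ → A ⊆ A' ∧ ∀ x ∈ A, f x = f' x) →
        A' = Amax ∧ ∀ x ∈ Amax, f' x = fmax x := by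
  classical
  -- the set of representatives
  set S : Set (Set X × (X → ℝ)) :=
    {p | IsOpen p.1 ∧ Dense p.1 ∧ ContinuousOn p.2 p.1 ∧ AeEquiv p.1 p.2 A₀ f₀} with hS
  have h0S : (A₀, f₀) ∈ S :=
    ⟨hA₀o, hA₀d, hf₀, A₀, hA₀o, hA₀d, by simp [Set.subset_inter_iff], fun x _ => rfl⟩
  -- any two representatives agree on the intersection of their domains
  have key : ∀ p ∈ S, ∀ q ∈ S, ∀ x, x ∈ p.1 → x ∈ q.1 → p.2 x = q.2 x := by
    rintro p ⟨hpo, hpd, hpc, C₁, hC₁o, hC₁d, hC₁s, hC₁e⟩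
      ⟨B, g⟩ ⟨hqo, hqd, hqc, C₂, hC₂o, hC₂d, hC₂s, hC₂e⟩ x hxp hxq
    have hCd : Dense (C₁ ∩ C₂) := hC₁d.inter_of_isOpen_left hC₂d hC₁o
    refine eq_on_inter_of_dense hpo hqo hpc hqc hCd ?_ hxp hxq
    intro y hy
    rw [hC₁e y hy.1, ← hC₂e y hy.2]
  refine ⟨⋃ p ∈ S, p.1,
    fun x => if h : ∃ p ∈ S, x ∈ p.1 then h.choose.2 x else 0, ?_⟩
  set Amax : Set X := ⋃ p ∈ S, p.1 with hAmax
  set fmax : X → ℝ := fun x => if h : ∃ p ∈ S, x ∈ p.1 then h.choose.2 x else 0 with hfmax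
  have hfmax_eq : ∀ p ∈ S, ∀ x ∈ p.1, fmax x = p.2 x := by
    intro p hp x hx
    have h : ∃ p ∈ S, x ∈ p.1 := ⟨p, hp, hx⟩
    simp only [hfmax, dif_pos h]
    exact key _ h.choose_spec.1 p hp x h.choose_spec.2 hx
  have hAo : IsOpen Amax := isOpen_biUnion fun p hp => hp.1
  have hsub : ∀ p ∈ S, p.1 ⊆ Amax := fun p hp => Set.subset_biUnion_of_mem hp
  have hAd : Dense Amax := hA₀d.mono (hsub _ h0S)
  have hcont : ContinuousOn fmax Amax := by
    intro x hx
    obtain ⟨p, hp, hxp⟩ : ∃ p ∈ S, x ∈ p.1 := by simpa [hAmax] using hx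
    have : ContinuousAt fmax x := by
      refine (hp.2.2.1.continuousAt (hp.1.mem_nhds hxp)).congr ?_
      filter_upwards [hp.1.mem_nhds hxp] with y hy using (hfmax_eq p hp y hy).symm
    exact this.continuousWithinAt
  have haemax : AeEquiv Amax fmax A₀ f₀ :=
    ⟨A₀, hA₀o, hA₀d, Set.subset_inter (hsub _ h0S) le_rfl,
      fun x hx => hfmax_eq _ h0S x hx⟩
  have hmaximal : ∀ (A : Set X) (f : X → ℝ), IsOpen A → Dense A → ContinuousOn f A →
      AeEquiv A f A₀ f₀ → A ⊆ Amax ∧ ∀ x ∈ A, f x = fmax x := by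
    intro A f ho hd hc he
    have hAS : (A, f) ∈ S := ⟨ho, hd, hc, he⟩
    exact ⟨hsub _ hAS, fun x hx => (hfmax_eq _ hAS x hx).symm⟩
  refine ⟨⟨hAo, hAd, hcont, haemax, hmaximal⟩, ?_⟩
  rintro A' f' ⟨ho', hd', hc', he', hmax'⟩
  obtain ⟨hs1, he1⟩ := hmax' Amax fmax hAo hAd hcont haemax
  obtain ⟨hs2, he2⟩ := hmaximal A' f' ho' hd' hc' he'
  exact ⟨le_antisymm hs2 hs1, fun x hx => (he1 x hx).symm⟩
end

section
/- Let R be a partially ordered commutative ring with ℕ ⊆ Loc(R) (so ℚ ⊆ R_loc^bd). Let K(R) denote the set of positive ring morphisms φ: R_loc^bd → ℝ with the weak-* topology. Then for every φ ∈ K(R) and every neighbourhood U of φ in K(R), there exists b ∈ R_loc^bd such that φ ∈ {ψ ∈ K(R) : ψ(b) < 0} ⊆ U. -/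
/-- Positive characters of a partially ordered commutative ring (to be applied to
`R_loc^bd`), with the weak-* topology of pointwise convergence. -/
def PosChar (A : Type*) [CommRing A] [PartialOrder A] : Type _ :=
  {φ : A →+* ℝ // ∀ a : A, 0 ≤ a → 0 ≤ φ a}

instance (A : Type*) [CommRing A] [PartialOrder A] : TopologicalSpace (PosChar A) :=
  TopologicalSpace.induced (fun φ : PosChar A => (φ.1 : A → ℝ)) inferInstance

/-- Basic neighbourhoods in `K(R)`: every neighbourhood of a positive character `φ` of
`R_loc^bd` (a partially ordered commutative ring containing `ℚ` all of whose elements are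
uniformly bounded by naturals) contains a basic set `{ψ : ψ(b) < 0}` containing `φ`. -/
theorem stmt_16 (A : Type*) [CommRing A] [PartialOrder A]
    [CovariantClass A A (· + ·) (· ≤ ·)] [Algebra ℚ A]
    (hsq : ∀ a : A, 0 ≤ a ^ 2)
    (hmul : ∀ a b : A, 0 ≤ a → 0 ≤ b → 0 ≤ a * b)
    (hbd : ∀ a : A, ∃ n : ℕ, -(n : A) ≤ a ∧ a ≤ (n : A))
    (φ : PosChar A) (U : Set (PosChar A)) (hU : U ∈ nhds φ) :
    ∃ b : A, φ.1 b < 0 ∧ {ψ : PosChar A | ψ.1 b < 0} ⊆ U := by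
  classical
  -- unpack the induced (weak-*) neighbourhood
  rw [mem_nhds_induced] at hU
  obtain ⟨V, hV, hVU⟩ := hU
  rw [nhds_pi, Filter.mem_pi'] at hV
  obtain ⟨I, t, ht, htV⟩ := hV
  -- radii for each coordinate
  have hball : ∀ i : A, ∃ r : ℝ, 0 < r ∧ Metric.ball (φ.1 i) r ⊆ t i := fun i => by
    rcases Metric.mem_nhds_iff.1 (ht i) with ⟨r, hr, hrt⟩
    exact ⟨r, hr, hrt⟩
  choose r hrpos hrball using hball
  -- a uniform radius ε0
  have key : ∀ J : Finset A, ∃ ε0 > 0, ∀ i ∈ J, ε0 ≤ r i := by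
    intro J
    induction J using Finset.induction with
    | empty => exact ⟨1, one_pos, by simp⟩
    | @insert a s hnotmem ih =>
      obtain ⟨ε0, hε0, hle⟩ := ih
      refine ⟨min (r a) ε0, lt_min (hrpos a) hε0, ?_⟩
      intro i hi
      rcases Finset.mem_insert.1 hi with h | h
      · exact h ▸ min_le_left _ _
      · exact (min_le_right _ _).trans (hle i h)
  obtain ⟨ε0, hε0, hε0le⟩ := key I
  set n : ℕ := I.card
  -- a rational constant c with c > 0 and c > 4/ε0²
  obtain ⟨c, hc⟩ := exists_rat_gt (max 0 (4 / ε0 ^ 2))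
  have hc0 : (0 : ℝ) < (c : ℝ) := lt_of_le_of_lt (le_max_left _ _) hc
  have hc4 : 4 / ε0 ^ 2 < (c : ℝ) := lt_of_le_of_lt (le_max_right _ _) hc
  -- δ : how close we approximate φ by rationals
  set δ : ℝ := min (ε0 / 2) (Real.sqrt (1 / (2 * c * (n + 1)))) with hδdef
  have hδpos : 0 < δ := by
    apply lt_min (by linarith)
    apply Real.sqrt_pos.2
    positivity
  have hδle : δ ≤ ε0 / 2 := min_le_left _ _
  have hδsq : δ ^ 2 ≤ 1 / (2 * c * (n + 1)) := by
    have h1 : δ ≤ Real.sqrt (1 / (2 * c * (n + 1))) := min_le_right _ _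
    have h2 : δ ^ 2 ≤ Real.sqrt (1 / (2 * c * (n + 1))) ^ 2 :=
      pow_le_pow_left₀ hδpos.le h1 2
    rwa [Real.sq_sqrt (by positivity)] at h2
  -- rational approximations
  have happrox : ∀ i : A, ∃ q : ℚ, |φ.1 i - (q : ℝ)| < δ := fun i =>
    exists_rat_near (φ.1 i) hδpos
  choose l hl using happrox
  -- the witness
  set b : A := algebraMap ℚ A (-1) + algebraMap ℚ A c *
      ∑ i ∈ I, (i - algebraMap ℚ A (l i)) ^ 2 with hbdef
  have hcast : ∀ (ψ : PosChar A) (q : ℚ), ψ.1 (algebraMap ℚ A q) = (q : ℝ) := by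
    intro ψ q
    have h := eq_ratCast (ψ.1.comp (algebraMap ℚ A)) q
    simpa using h
  have hval : ∀ ψ : PosChar A,
      ψ.1 b = -1 + (c : ℝ) * ∑ i ∈ I, (ψ.1 i - (l i : ℝ)) ^ 2 := by
    intro ψ
    simp only [hbdef, map_add, map_mul, map_sum, map_sub, map_pow, hcast ψ]
    push_cast
    ring
  refine ⟨b, ?_, ?_⟩
  · -- φ.1 b < 0
    rw [hval φ]
    have hterm : ∀ i ∈ I, (φ.1 i - (l i : ℝ)) ^ 2 ≤ δ ^ 2 := by
      intro i _
      have h := (hl i).le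
      have h2 : |φ.1 i - (l i : ℝ)| ^ 2 ≤ δ ^ 2 := pow_le_pow_left₀ (abs_nonneg _) h 2
      simpa [sq_abs] using h2
    have hS : ∑ i ∈ I, (φ.1 i - (l i : ℝ)) ^ 2 ≤ (n : ℝ) * δ ^ 2 := by
      have h := Finset.sum_le_card_nsmul I _ (δ ^ 2) hterm
      simpa [nsmul_eq_mul, n] using h
    have hδsq' : 2 * (c : ℝ) * ((n : ℝ) + 1) * δ ^ 2 ≤ 1 := by
      have h := hδsq
      rw [le_div_iff₀ (by positivity)] at h
      linarith
    have hccS := mul_le_mul_of_nonneg_left hS hc0.le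
    nlinarith [mul_nonneg hc0.le (sq_nonneg δ), Nat.cast_nonneg (α := ℝ) n]
  · -- inclusion into U
    intro ψ hψ
    apply hVU
    refine htV ?_
    intro i hi
    replace hi : i ∈ I := hi
    apply hrball i
    rw [Metric.mem_ball, Real.dist_eq]
    have hb2 : ψ.1 b < 0 := hψ
    rw [hval ψ] at hb2
    have hterm : (ψ.1 i - (l i : ℝ)) ^ 2 ≤ ∑ j ∈ I, (ψ.1 j - (l j : ℝ)) ^ 2 :=
      Finset.single_le_sum (f := fun j => (ψ.1 j - (l j : ℝ)) ^ 2) (fun j _ => sq_nonneg _) hi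
    have h5 : (ψ.1 i - (l i : ℝ)) ^ 2 < (ε0 / 2) ^ 2 := by
      have h1c : (c : ℝ) * ∑ j ∈ I, (ψ.1 j - (l j : ℝ)) ^ 2 < 1 := by linarith
      have h4 : 4 < (c : ℝ) * ε0 ^ 2 := by
        have h := hc4
        rwa [div_lt_iff₀ (by positivity : (0 : ℝ) < ε0 ^ 2)] at h
      nlinarith [mul_le_mul_of_nonneg_left hterm hc0.le, sq_nonneg ε0]
    have h6 : |ψ.1 i - (l i : ℝ)| < ε0 / 2 := by
      refine lt_of_pow_lt_pow_left₀ 2 (by linarith) ?_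
      simpa [sq_abs] using h5
    have h7 : |φ.1 i - (l i : ℝ)| < ε0 / 2 := lt_of_lt_of_le (hl i) hδle
    have h8 : |ψ.1 i - φ.1 i| < ε0 := by
      have := abs_sub (ψ.1 i - (l i : ℝ)) (φ.1 i - (l i : ℝ))
      calc |ψ.1 i - φ.1 i| = |(ψ.1 i - (l i : ℝ)) - (φ.1 i - (l i : ℝ))| := by ring_nf
        _ ≤ |ψ.1 i - (l i : ℝ)| + |φ.1 i - (l i : ℝ)| := abs_sub _ _
        _ < ε0 / 2 + ε0 / 2 := add_lt_add h6 h7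
        _ = ε0 := by ring
    exact lt_of_lt_of_le h8 (hε0le i hi)
end

section
/- Let R be a localizable partially ordered commutative ring with ℕ ⊆ Loc(R). Then the kernel of the extended Gelfand transformation R → C_≈(D_loc(R)) equals {r ∈ R : there is s ∈ R⁺ such that −s ≤ nr ≤ s for all n ∈ ℕ}. Equivalently, (R⁺)‡ ∩ (−(R⁺))‡ = {r ∈ R : ∃ s ∈ R⁺ with −s ≤ nr ≤ s for all n ∈ ℕ}, where M‡ := {g : ∃ h with kg + h ∈ M for all k ∈ ℕ}. -/
/-! Given `0 ≤ k • r + e` and `0 ≤ k • (-r) + f` for all `k ≥ 1`, adding the instance `k = n + 1`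
of one to the instance `k = 1` of the other cancels a single copy of `r`, which gives
`-(e + f) ≤ n • r ≤ e + f`; so `s := e + f` works. -/

section

variable {G : Type*} [AddCommGroup G] [Preorder G] [AddLeftMono G]

theorem neg_add_le_nsmul_of_nonneg {r e f : G} {n : ℕ}
    (he : 0 ≤ (n + 1) • r + e) (hf : 0 ≤ -r + f) : -(e + f) ≤ n • r := by
  rw [neg_le_iff_add_nonneg']
  convert add_nonneg he hf using 1
  rw [succ_nsmul]
  abel

theorem exists_nsmul_add_nonneg_and_iff_exists_abs_nsmul_le (r : G) :
    ((∃ e : G, ∀ k : ℕ, 1 ≤ k → 0 ≤ k • r + e) ∧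
        (∃ f : G, ∀ k : ℕ, 1 ≤ k → 0 ≤ k • (-r) + f)) ↔
      ∃ s : G, 0 ≤ s ∧ ∀ n : ℕ, 1 ≤ n → -s ≤ n • r ∧ n • r ≤ s := by
  constructor
  · rintro ⟨⟨e, he⟩, f, hf⟩
    have hre : 0 ≤ r + e := by simpa using he 1 le_rfl
    have hrf : 0 ≤ -r + f := by simpa using hf 1 le_rfl
    refine ⟨e + f, ?_, fun n _ => ⟨?_, ?_⟩⟩
    · have h := neg_add_le_nsmul_of_nonneg (n := 0) (by simpa using hre) hrf
      rwa [zero_smul, neg_nonpos] at h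
    · exact neg_add_le_nsmul_of_nonneg (he (n + 1) (by omega)) hrf
    · have h := neg_add_le_nsmul_of_nonneg (hf (n + 1) (by omega)) (by simpa using hre)
      rwa [smul_neg, neg_le_neg_iff, add_comm] at h
  · rintro ⟨s, -, hs⟩
    refine ⟨⟨s, fun k hk => ?_⟩, ⟨s, fun k hk => ?_⟩⟩
    · exact neg_le_iff_add_nonneg.mp (hs k hk).1
    · rw [smul_neg, neg_add_eq_sub, sub_nonneg]
      exact (hs k hk).2

end

theorem stmt_18_general (R : Type*) [CommRing R] [PartialOrder R]
    [CovariantClass R R (· + ·) (· ≤ ·)] :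
    ∀ r : R,
      ((∃ h : R, ∀ k : ℕ, 1 ≤ k → 0 ≤ (k : R) * r + h) ∧
        (∃ h : R, ∀ k : ℕ, 1 ≤ k → 0 ≤ (k : R) * (-r) + h)) ↔
      ∃ s : R, 0 ≤ s ∧ ∀ n : ℕ, 1 ≤ n → -s ≤ (n : R) * r ∧ (n : R) * r ≤ s := by
  intro r
  simp only [← nsmul_eq_mul]
  exact exists_nsmul_add_nonneg_and_iff_exists_abs_nsmul_le r

/-- Algebraic description of the kernel of the extended Gelfand transformation:
`(R⁺)‡ ∩ (−(R⁺)‡) = {r | ∃ s ∈ R⁺, ∀ n ∈ ℕ, −s ≤ nr ≤ s}`. -/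
theorem stmt_18 (R : Type*) [CommRing R] [PartialOrder R]
    [CovariantClass R R (· + ·) (· ≤ ·)]
    (hsq : ∀ r : R, 0 ≤ r ^ 2)
    (hmul : ∀ a b : R, 0 ≤ a → 0 ≤ b → 0 ≤ a * b) :
    ∀ r : R,
      ((∃ h : R, ∀ k : ℕ, 1 ≤ k → 0 ≤ (k : R) * r + h) ∧
        (∃ h : R, ∀ k : ℕ, 1 ≤ k → 0 ≤ (k : R) * (-r) + h)) ↔
      ∃ s : R, 0 ≤ s ∧ ∀ n : ℕ, 1 ≤ n → -s ≤ (n : R) * r ∧ (n : R) * r ≤ s :=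
  stmt_18_general R
end
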